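/- arXiv:1309.4230 — 4 statements merged into one kernel-verified Lean document; each statement's English description precedes it below -/
import Mathlib

section
/- Let V be a finite-dimensional complex inner product space (inner product conjugate-linear in the first argument), V* its complex dual, and W := V × V*. Define the complex bilinear form Q on W by Q((a, φ), (b, ψ)) := ψ(a) + φ(b), and let ♭ : V → V* be the conjugate-linear bijection v ↦ ⟪v, ·⟫. Define J : W → W by J(a, φ) := (♭⁻¹(φ), ♭(a)). Then: (1) Q is symmetric and nondegenerate, and both V × {0} and {0} × V* are isotropic for Q; (2) J is a conjugate-linear involution on W interchanging V × {0} and {0} × V*, with fixed-point set {(a, ♭(a)) | a ∈ V}; (3) for every α = (a, φ) ∈ W one has Q(α, J α) = ‖a‖² + ‖♭⁻¹(φ)‖², which is real, nonnegative, and zero iff α = 0; (4) the projection π₊ := ½(id + J) is injective on V × {0}; consequently, for any set S and any function κ : S → W whose range lies in V × {0}, if π₊ ∘ κ = 0 then κ = 0. -/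
/-! The hyperbolic form `Q` pairs `V` with `V*`, so it is symmetric with both factors isotropic,
and it is nondegenerate because `V*` separates the points of `V`. The map `J` swaps the factors
through the conjugate-linear bijection `♭`, hence is a conjugate-linear involution, and
`Q(α, Jα) = ⟪a, a⟫ + ⟪♭⁻¹φ, ♭⁻¹φ⟫` is a sum of squared norms. On `V × 0` the first coordinate
of `π₊ (a, 0) = ½ (a, ♭ a)` is `½ a`, which already determines `a`. -/

section HyperbolicForm

variable {R M : Type*} [CommSemiring R] [AddCommMonoid M] [Module R M]

def hyperbolicForm (p q : M × Module.Dual R M) : R :=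
  q.2 p.1 + p.2 q.1

theorem hyperbolicForm_comm (p q : M × Module.Dual R M) :
    hyperbolicForm p q = hyperbolicForm q p :=
  add_comm _ _

theorem hyperbolicForm_inl_inl (a b : M) :
    hyperbolicForm ((a, 0) : M × Module.Dual R M) (b, 0) = 0 := by
  simp [hyperbolicForm]

theorem hyperbolicForm_inr_inr (φ ψ : Module.Dual R M) :
    hyperbolicForm ((0, φ) : M × Module.Dual R M) (0, ψ) = 0 := by
  simp [hyperbolicForm]

theorem hyperbolicForm_nondegenerate [Module.Projective R M] (p : M × Module.Dual R M)
    (hp : ∀ q, hyperbolicForm p q = 0) : p = 0 := by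
  have hdual : p.2 = 0 := LinearMap.ext fun b => by simpa [hyperbolicForm] using hp (b, 0)
  have hvec : p.1 = 0 :=
    (Module.forall_dual_apply_eq_zero_iff R p.1).mp fun φ => by
      simpa [hyperbolicForm, hdual] using hp (0, φ)
  exact Prod.ext hvec hdual

end HyperbolicForm

namespace LinearEquiv

variable {R M N : Type*} [CommSemiring R] [StarRing R] [AddCommMonoid M] [AddCommMonoid N]
  [Module R M] [Module R N] (e : M ≃ₗ⋆[R] N)

def swapVia : (M × N) ≃ₗ⋆[R] (M × N) where
  toFun p := (e.symm p.2, e p.1)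
  invFun p := (e.symm p.2, e p.1)
  map_add' p q := by simp
  map_smul' c p := by simp [map_smulₛₗ]
  left_inv p := by simp
  right_inv p := by simp

@[simp]
theorem swapVia_apply (p : M × N) : e.swapVia p = (e.symm p.2, e p.1) :=
  rfl

theorem swapVia_swapVia (p : M × N) : e.swapVia (e.swapVia p) = p := by
  simp

theorem swapVia_inl (a : M) : e.swapVia (a, 0) = (0, e a) := by
  simp

theorem swapVia_inr (φ : N) : e.swapVia (0, φ) = (e.symm φ, 0) := by
  simp

theorem swapVia_eq_self_iff (p : M × N) : e.swapVia p = p ↔ ∃ a, p = (a, e a) := by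
  constructor
  · intro h
    exact ⟨p.1, Prod.ext rfl (congrArg Prod.snd h).symm⟩
  · rintro ⟨a, rfl⟩
    simp

end LinearEquiv

section PlusProjection

variable {R M N : Type*} [Field R] [StarRing R] [NeZero (2 : R)] [AddCommGroup M]
  [AddCommGroup N] [Module R M] [Module R N] (e : M ≃ₗ⋆[R] N)

theorem injective_half_add_swapVia_inl :
    Function.Injective fun a : M => (2⁻¹ : R) • (((a, 0) : M × N) + e.swapVia (a, 0)) := by
  intro a b hab
  have hfst : (2⁻¹ : R) • a = (2⁻¹ : R) • b := by simpa using congrArg Prod.fst hab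
  exact smul_right_injective M (inv_ne_zero two_ne_zero) hfst

theorem eq_zero_of_half_add_swapVia_eq_zero (p : M × N) (hp : p.2 = 0)
    (h : (2⁻¹ : R) • (p + e.swapVia p) = 0) : p = 0 := by
  obtain ⟨a, rfl⟩ : ∃ a, p = (a, 0) := ⟨p.1, Prod.ext rfl hp⟩
  have ha : a = 0 := injective_half_add_swapVia_inl e (by simpa using h)
  simp [ha]

end PlusProjection

section InnerProduct

variable {𝕜 E : Type*} [RCLike 𝕜] [NormedAddCommGroup E] [InnerProductSpace 𝕜 E]

def Equiv.toConjLinearEquivOfInner (flat : E ≃ Module.Dual 𝕜 E)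
    (hflat : ∀ v w : E, flat v w = inner 𝕜 v w) : E ≃ₗ⋆[𝕜] Module.Dual 𝕜 E :=
  { flat with
    map_add' := fun v w => LinearMap.ext fun u => by simp [hflat, inner_add_left]
    map_smul' := fun c v => LinearMap.ext fun u => by simp [hflat, inner_smul_left] }

theorem hyperbolicForm_swapVia (e : E ≃ₗ⋆[𝕜] Module.Dual 𝕜 E)
    (he : ∀ v w : E, e v w = inner 𝕜 v w) (a : E) (φ : Module.Dual 𝕜 E) :
    hyperbolicForm (a, φ) (e.swapVia (a, φ)) = ((‖a‖ ^ 2 + ‖e.symm φ‖ ^ 2 : ℝ) : 𝕜) := by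
  have hφ : φ (e.symm φ) = inner 𝕜 (e.symm φ) (e.symm φ) := by
    simpa using he (e.symm φ) (e.symm φ)
  simp only [hyperbolicForm, LinearEquiv.swapVia_apply, he, hφ, inner_self_eq_norm_sq_to_K]
  push_cast
  ring

theorem hyperbolicForm_swapVia_eq_zero_iff (e : E ≃ₗ⋆[𝕜] Module.Dual 𝕜 E)
    (he : ∀ v w : E, e v w = inner 𝕜 v w) (a : E) (φ : Module.Dual 𝕜 E) :
    hyperbolicForm (a, φ) (e.swapVia (a, φ)) = 0 ↔ (a, φ) = 0 := by
  rw [hyperbolicForm_swapVia e he, RCLike.ofReal_eq_zero,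
    add_eq_zero_iff_of_nonneg (sq_nonneg _) (sq_nonneg _), sq_eq_zero_iff, sq_eq_zero_iff,
    norm_eq_zero, norm_eq_zero, map_eq_zero_iff _ e.symm.injective, Prod.mk_eq_zero]

end InnerProduct

theorem stmt4_general (V : Type*) [NormedAddCommGroup V] [InnerProductSpace ℂ V]
    (flat : V ≃ Module.Dual ℂ V)
    (hflat : ∀ v w : V, flat v w = (inner ℂ v w : ℂ))
    (Q : (V × Module.Dual ℂ V) → (V × Module.Dual ℂ V) → ℂ)
    (hQ : ∀ p q : V × Module.Dual ℂ V, Q p q = q.2 p.1 + p.2 q.1)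
    (Jm : (V × Module.Dual ℂ V) → (V × Module.Dual ℂ V))
    (hJ : ∀ p : V × Module.Dual ℂ V, Jm p = (flat.symm p.2, flat p.1)) :
    -- (1)
    ((∀ p q, Q p q = Q q p) ∧
     (∀ p, (∀ q, Q p q = 0) → p = 0) ∧
     (∀ a b : V, Q (a, 0) (b, 0) = 0) ∧
     (∀ φ ψ : Module.Dual ℂ V, Q (0, φ) (0, ψ) = 0)) ∧
    -- (2)
    ((∀ p q, Jm (p + q) = Jm p + Jm q) ∧
     (∀ (c : ℂ) p, Jm (c • p) = (starRingEnd ℂ c) • Jm p) ∧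
     (∀ p, Jm (Jm p) = p) ∧
     (∀ a : V, Jm (a, 0) = (0, flat a)) ∧
     (∀ φ : Module.Dual ℂ V, Jm (0, φ) = (flat.symm φ, 0)) ∧
     (∀ p, Jm p = p ↔ ∃ a : V, p = (a, flat a))) ∧
    -- (3)
    ((∀ (a : V) (φ : Module.Dual ℂ V),
        Q (a, φ) (Jm (a, φ)) = ((‖a‖ ^ 2 + ‖flat.symm φ‖ ^ 2 : ℝ) : ℂ)) ∧
     (∀ (a : V) (φ : Module.Dual ℂ V),
        (Q (a, φ) (Jm (a, φ))).im = 0 ∧ 0 ≤ (Q (a, φ) (Jm (a, φ))).re) ∧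
     (∀ (a : V) (φ : Module.Dual ℂ V),
        Q (a, φ) (Jm (a, φ)) = 0 ↔ (a, φ) = (0 : V × Module.Dual ℂ V))) ∧
    -- (4)
    ((Function.Injective fun a : V =>
        (2⁻¹ : ℂ) • (((a, 0) : V × Module.Dual ℂ V) + Jm (a, 0))) ∧
     ∀ (S : Type*) (κ : S → V × Module.Dual ℂ V),
       (∀ s, (κ s).2 = 0) → (∀ s, (2⁻¹ : ℂ) • (κ s + Jm (κ s)) = 0) → ∀ s, κ s = 0) := by
  -- `e` has `flat` as its underlying function, so statements about `e` close goals about `flat`.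
  let e := flat.toConjLinearEquivOfInner hflat
  obtain rfl : Q = hyperbolicForm := funext fun p => funext (hQ p)
  obtain rfl : Jm = e.swapVia := funext hJ
  refine ⟨⟨hyperbolicForm_comm, hyperbolicForm_nondegenerate, hyperbolicForm_inl_inl,
      hyperbolicForm_inr_inr⟩,
    ⟨map_add e.swapVia, map_smulₛₗ e.swapVia, e.swapVia_swapVia, e.swapVia_inl, e.swapVia_inr,
      e.swapVia_eq_self_iff⟩,
    ⟨hyperbolicForm_swapVia e hflat, fun a φ => ?_, hyperbolicForm_swapVia_eq_zero_iff e hflat⟩,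
    injective_half_add_swapVia_inl e,
    fun S κ hκ h s => eq_zero_of_half_add_swapVia_eq_zero e (κ s) (hκ s) (h s)⟩
  rw [hyperbolicForm_swapVia e hflat]
  exact ⟨Complex.ofReal_im _, (Complex.ofReal_re _).symm ▸ by positivity⟩

/-- For a finite-dimensional complex inner product space `V`, the space
`W = V × V*` with the bilinear form `Q((a,φ),(b,ψ)) = ψ(a) + φ(b)` and the conjugate-linear
involution `J(a,φ) = (♭⁻¹ φ, ♭ a)` (where `♭ v = ⟪v, ·⟫`): `Q` is symmetric, nondegenerate,
with `V × 0` and `0 × V*` isotropic; `J` is a conjugate-linear involution interchanging the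
two factors with fixed set `{(a, ♭a)}`; `Q(α, Jα) = ‖a‖² + ‖♭⁻¹φ‖²` is real, nonnegative and
zero iff `α = 0`; and `π₊ = ½(id + J)` is injective on `V × 0`, so any `κ` with range in
`V × 0` and `π₊ ∘ κ = 0` vanishes. -/
theorem stmt4 (V : Type*) [NormedAddCommGroup V] [InnerProductSpace ℂ V]
    [FiniteDimensional ℂ V]
    (flat : V ≃ Module.Dual ℂ V)
    (hflat : ∀ v w : V, flat v w = (inner ℂ v w : ℂ))
    (Q : (V × Module.Dual ℂ V) → (V × Module.Dual ℂ V) → ℂ)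
    (hQ : ∀ p q : V × Module.Dual ℂ V, Q p q = q.2 p.1 + p.2 q.1)
    (Jm : (V × Module.Dual ℂ V) → (V × Module.Dual ℂ V))
    (hJ : ∀ p : V × Module.Dual ℂ V, Jm p = (flat.symm p.2, flat p.1)) :
    -- (1)
    ((∀ p q, Q p q = Q q p) ∧
     (∀ p, (∀ q, Q p q = 0) → p = 0) ∧
     (∀ a b : V, Q (a, 0) (b, 0) = 0) ∧
     (∀ φ ψ : Module.Dual ℂ V, Q (0, φ) (0, ψ) = 0)) ∧
    -- (2)
    ((∀ p q, Jm (p + q) = Jm p + Jm q) ∧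
     (∀ (c : ℂ) p, Jm (c • p) = (starRingEnd ℂ c) • Jm p) ∧
     (∀ p, Jm (Jm p) = p) ∧
     (∀ a : V, Jm (a, 0) = (0, flat a)) ∧
     (∀ φ : Module.Dual ℂ V, Jm (0, φ) = (flat.symm φ, 0)) ∧
     (∀ p, Jm p = p ↔ ∃ a : V, p = (a, flat a))) ∧
    -- (3)
    ((∀ (a : V) (φ : Module.Dual ℂ V),
        Q (a, φ) (Jm (a, φ)) = ((‖a‖ ^ 2 + ‖flat.symm φ‖ ^ 2 : ℝ) : ℂ)) ∧
     (∀ (a : V) (φ : Module.Dual ℂ V),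
        (Q (a, φ) (Jm (a, φ))).im = 0 ∧ 0 ≤ (Q (a, φ) (Jm (a, φ))).re) ∧
     (∀ (a : V) (φ : Module.Dual ℂ V),
        Q (a, φ) (Jm (a, φ)) = 0 ↔ (a, φ) = (0 : V × Module.Dual ℂ V))) ∧
    -- (4)
    ((Function.Injective fun a : V =>
        (2⁻¹ : ℂ) • (((a, 0) : V × Module.Dual ℂ V) + Jm (a, 0))) ∧
     ∀ (S : Type*) (κ : S → V × Module.Dual ℂ V),
       (∀ s, (κ s).2 = 0) → (∀ s, (2⁻¹ : ℂ) • (κ s + Jm (κ s)) = 0) → ∀ s, κ s = 0) :=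
  stmt4_general V flat hflat Q hQ Jm hJ
end

section
/- Let F₁, F₂, G be complex Banach spaces and E := F₁ × F₂. Let U be an open neighborhood of 0 in E and h : U → G an analytic map such that h(t, 0) = 0 for all t ∈ F₁ with (t, 0) ∈ U. Then there exist an open neighborhood U' ⊆ U of 0 and an analytic map f : U' → L(F₂, G) (the Banach space of continuous linear maps from F₂ to G with the operator norm) such that h(t, s) = f(t, s)(s) for all (t, s) ∈ U'. -/
/-!
Expand `h` in its power series `∑ pₙ` at `0`. Telescoping along the tuples `(x, …, x, y, …, y)`
gives `pₙ(x, …, x) - pₙ(y, …, y) = ∑ₖ pₙ(x, …, x, x - y, y, …, y)` with `x - y` in slot `k`,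
a linear map of `x - y` depending multilinearly on `(x, y)`. These divided differences have
norm at most `n ‖pₙ‖`, so they form a power series of positive radius whose sum `Φ` is analytic
with `h x - h y = Φ (x, y) (x - y)`. Taking `y = (t, 0)`, where `h` vanishes, leaves
`h (t, s) = Φ ((t, s), (t, 0)) (0, s)`.
-/

theorem Fin.insertNth_ite_lt {α : Type*} {n : ℕ} (k : Fin (n + 1)) (x y : α) {m : ℕ}
    (hm : m = k ∨ m = k + 1) :
    k.insertNth (if (k : ℕ) < m then x else y) (fun i : Fin n => if (i : ℕ) < k then x else y) =
      fun j : Fin (n + 1) => if (j : ℕ) < m then x else y := by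
  funext j
  rcases Fin.eq_self_or_eq_succAbove k j with rfl | ⟨i, rfl⟩
  · rw [Fin.insertNth_apply_same]
  · rw [Fin.insertNth_apply_succAbove]
    rcases lt_or_ge i.castSucc k with h | h
    · rw [Fin.succAbove_of_castSucc_lt _ _ h]
      simp only [Fin.lt_def, Fin.val_castSucc] at h ⊢
      grind
    · rw [Fin.succAbove_of_le_castSucc _ _ h]
      simp only [Fin.le_def, Fin.val_castSucc, Fin.val_succ] at h ⊢
      grind

section

variable {𝕜 E G : Type*} [NontriviallyNormedField 𝕜]
  [NormedAddCommGroup E] [NormedSpace 𝕜 E] [NormedAddCommGroup G] [NormedSpace 𝕜 G]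

namespace ContinuousMultilinearMap

variable {n : ℕ}

noncomputable def divDiffTerm (f : ContinuousMultilinearMap 𝕜 (fun _ : Fin (n + 1) => E) G)
    (k : Fin (n + 1)) : ContinuousMultilinearMap 𝕜 (fun _ : Fin n => E × E) (E →L[𝕜] G) :=
  (f.curryMid k).flipMultilinear.compContinuousLinearMap fun i =>
    if (i : ℕ) < k then ContinuousLinearMap.fst 𝕜 E E else ContinuousLinearMap.snd 𝕜 E E

theorem divDiffTerm_apply_diag (f : ContinuousMultilinearMap 𝕜 (fun _ : Fin (n + 1) => E) G)
    (k : Fin (n + 1)) (x y v : E) :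
    f.divDiffTerm k (fun _ => (x, y)) v =
      f (k.insertNth v fun i => if (i : ℕ) < k then x else y) := by
  simp only [divDiffTerm, compContinuousLinearMap_apply,
    ContinuousLinearMap.flipMultilinear_apply_apply, curryMid_apply]
  congr 2
  funext i
  split_ifs <;> rfl

theorem norm_divDiffTerm_le (f : ContinuousMultilinearMap 𝕜 (fun _ : Fin (n + 1) => E) G)
    (k : Fin (n + 1)) : ‖f.divDiffTerm k‖ ≤ ‖f‖ := by
  refine (norm_compContinuousLinearMap_le _ _).trans ?_
  have hslots : ∏ i : Fin n, ‖if (i : ℕ) < k then ContinuousLinearMap.fst 𝕜 E E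
      else ContinuousLinearMap.snd 𝕜 E E‖ ≤ 1 := by
    refine Finset.prod_le_one (fun _ _ => norm_nonneg _) fun i _ => ?_
    split_ifs
    · exact ContinuousLinearMap.norm_fst_le 𝕜 E E
    · exact ContinuousLinearMap.norm_snd_le 𝕜 E E
  have hflip : ‖(f.curryMid k).flipMultilinear‖ ≤ ‖f‖ :=
    (MultilinearMap.mkContinuous_norm_le _ (norm_nonneg _) _).trans (norm_curryMid k f).le
  calc _ ≤ ‖f‖ * 1 := by gcongr
    _ = ‖f‖ := mul_one _

noncomputable def divDiff (f : ContinuousMultilinearMap 𝕜 (fun _ : Fin (n + 1) => E) G) :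
    ContinuousMultilinearMap 𝕜 (fun _ : Fin n => E × E) (E →L[𝕜] G) :=
  ∑ k, f.divDiffTerm k

theorem norm_divDiff_le (f : ContinuousMultilinearMap 𝕜 (fun _ : Fin (n + 1) => E) G) :
    ‖f.divDiff‖ ≤ (n + 1) * ‖f‖ :=
  calc ‖f.divDiff‖ ≤ ∑ k, ‖f.divDiffTerm k‖ := norm_sum_le Finset.univ f.divDiffTerm
    _ ≤ ∑ _k : Fin (n + 1), ‖f‖ := Finset.sum_le_sum fun k _ => f.norm_divDiffTerm_le k
    _ = (n + 1) * ‖f‖ := by simp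

theorem divDiff_apply_diag (f : ContinuousMultilinearMap 𝕜 (fun _ : Fin (n + 1) => E) G)
    (x y : E) : f.divDiff (fun _ => (x, y)) (x - y) = f (fun _ => x) - f (fun _ => y) := by
  set D : ℕ → Fin (n + 1) → E := fun m j => if (j : ℕ) < m then x else y
  have hstep (k : Fin (n + 1)) :
      f.divDiffTerm k (fun _ => (x, y)) (x - y) = f (D (k + 1)) - f (D k) := by
    have hnext := Fin.insertNth_ite_lt k x y (m := k + 1) (.inr rfl)
    have hcurr := Fin.insertNth_ite_lt k x y (m := k) (.inl rfl)
    rw [if_pos (Nat.lt_succ_self _)] at hnext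
    rw [if_neg (lt_irrefl _)] at hcurr
    rw [divDiffTerm_apply_diag, ← curryMid_apply, map_sub, sub_apply, curryMid_apply,
      curryMid_apply, hnext, hcurr]
  have hlast : D (n + 1) = fun _ => x := funext fun j => if_pos j.isLt
  have hfirst : D 0 = fun _ => y := funext fun j => if_neg (Nat.not_lt_zero _)
  rw [divDiff, sum_apply, _root_.sum_apply, Finset.sum_congr rfl fun k _ => hstep k,
    Fin.sum_univ_eq_sum_range (fun k => f (D (k + 1)) - f (D k)),
    Finset.sum_range_sub (fun m => f (D m)), hlast, hfirst]

end ContinuousMultilinearMap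

namespace FormalMultilinearSeries

noncomputable def divDiff (p : FormalMultilinearSeries 𝕜 E G) :
    FormalMultilinearSeries 𝕜 (E × E) (E →L[𝕜] G) :=
  fun n => (p (n + 1)).divDiff

theorem radius_divDiff_pos {p : FormalMultilinearSeries 𝕜 E G} (hp : 0 < p.radius) :
    0 < p.divDiff.radius := by
  obtain ⟨r, hr0, hrp⟩ := ENNReal.lt_iff_exists_nnreal_btwn.1 hp
  have hr : 0 < (r : ℝ) := by exact_mod_cast hr0
  obtain ⟨C, -, hC⟩ := p.norm_mul_pow_le_of_lt_radius hrp
  refine lt_of_lt_of_le ?_ (p.divDiff.le_radius_of_bound (C / r) (r := r / 2) fun n => ?_)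
  · simpa [pos_iff_ne_zero] using hr0
  have hn : ((n : ℝ) + 1) / 2 ^ n ≤ 1 := by
    rw [div_le_one (by positivity)]
    exact_mod_cast Nat.lt_two_pow_self
  calc ‖p.divDiff n‖ * ((r / 2 : NNReal) : ℝ) ^ n
      ≤ (n + 1) * ‖p (n + 1)‖ * ((r : ℝ) ^ n / 2 ^ n) := by
        push_cast
        rw [div_pow]
        gcongr
        exact (p (n + 1)).norm_divDiff_le
    _ = ((n + 1) / 2 ^ n) * (‖p (n + 1)‖ * (r : ℝ) ^ (n + 1)) / r := by
        field_simp
        ring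
    _ ≤ 1 * C / r := by gcongr; exact hC _
    _ = C / r := by rw [one_mul]

end FormalMultilinearSeries

theorem HasFPowerSeriesOnBall.sub_eq_divDiff_sum [CompleteSpace G] {f : E → G}
    {p : FormalMultilinearSeries 𝕜 E G} {x₀ : E} {r : ENNReal}
    (hf : HasFPowerSeriesOnBall f p x₀ r) {x y : E} (hx : x ∈ Metric.eball 0 r)
    (hy : y ∈ Metric.eball 0 r) (hxy : (x, y) ∈ Metric.eball 0 p.divDiff.radius) :
    f (x₀ + x) - f (x₀ + y) = p.divDiff.sum (x, y) (x - y) := by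
  have hseries := (p.divDiff.hasSum hxy).mapL (ContinuousLinearMap.apply 𝕜 G (x - y))
  simp only [ContinuousLinearMap.apply_apply, FormalMultilinearSeries.divDiff,
    ContinuousMultilinearMap.divDiff_apply_diag] at hseries
  have hdiff := (hf.hasSum hx).sub (hf.hasSum hy)
  rw [← hasSum_nat_add_iff' 1] at hdiff
  simpa [Subsingleton.elim (fun _ : Fin 0 => x) (fun _ => y)] using hdiff.unique hseries

theorem AnalyticAt.exists_analyticOnNhd_sub_eq_apply_sub [CompleteSpace G] {f : E → G} {x₀ : E}
    (hf : AnalyticAt 𝕜 f x₀) :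
    ∃ r > 0, ∃ Φ : E × E → (E →L[𝕜] G), AnalyticOnNhd 𝕜 Φ (Metric.eball (x₀, x₀) r) ∧
      ∀ x ∈ Metric.eball x₀ r, ∀ y ∈ Metric.eball x₀ r, f x - f y = Φ (x, y) (x - y) := by
  obtain ⟨p, r, hp⟩ := hf
  have hq := p.divDiff.hasFPowerSeriesOnBall
    (FormalMultilinearSeries.radius_divDiff_pos hp.radius_pos)
  refine ⟨min r p.divDiff.radius, lt_min hp.r_pos hq.r_pos,
    fun z => p.divDiff.sum (z - (x₀, x₀)), ?_, fun x hx y hy => ?_⟩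
  · refine hq.analyticOnNhd.comp (analyticOnNhd_id.sub analyticOnNhd_const) fun z hz => ?_
    simp only [Metric.mem_eball, edist_zero_right, ← edist_eq_enorm_sub] at hz ⊢
    exact hz.trans_le (min_le_right _ _)
  · have hmem {z : E} (hz : z ∈ Metric.eball x₀ (min r p.divDiff.radius)) :
        z - x₀ ∈ Metric.eball 0 r ∧ edist (z - x₀) 0 < p.divDiff.radius := by
      simp only [Metric.mem_eball, edist_zero_right, ← edist_eq_enorm_sub, lt_min_iff] at hz ⊢
      exact hz
    have hxy : (x - x₀, y - x₀) ∈ Metric.eball 0 p.divDiff.radius := by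
      rw [Metric.mem_eball, Prod.edist_eq]
      exact max_lt (hmem hx).2 (hmem hy).2
    simpa using hp.sub_eq_divDiff_sum (hmem hx).1 (hmem hy).1 hxy

end

theorem Prod.mk_fst_zero_mem_eball {E F : Type*} [NormedAddCommGroup E] [NormedAddCommGroup F]
    {x : E × F} {r : ENNReal} (hx : x ∈ Metric.eball 0 r) : (x.1, (0 : F)) ∈ Metric.eball 0 r := by
  simp only [Metric.mem_eball, Prod.edist_eq, Prod.fst_zero, Prod.snd_zero, edist_self,
    max_lt_iff] at hx ⊢
  exact ⟨hx.1, zero_le.trans_lt hx.1⟩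

theorem stmt5_general (F₁ F₂ G : Type*)
    [NormedAddCommGroup F₁] [NormedSpace ℂ F₁]
    [NormedAddCommGroup F₂] [NormedSpace ℂ F₂]
    [NormedAddCommGroup G] [NormedSpace ℂ G] [CompleteSpace G]
    (U : Set (F₁ × F₂)) (hUopen : IsOpen U) (hU0 : (0 : F₁ × F₂) ∈ U)
    (h : F₁ × F₂ → G) (hh : AnalyticOnNhd ℂ h U)
    (hvan : ∀ t : F₁, (t, (0 : F₂)) ∈ U → h (t, 0) = 0) :
    ∃ (U' : Set (F₁ × F₂)) (f : F₁ × F₂ → (F₂ →L[ℂ] G)),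
      U' ⊆ U ∧ IsOpen U' ∧ (0 : F₁ × F₂) ∈ U' ∧
      AnalyticOnNhd ℂ f U' ∧
      ∀ p ∈ U', h p = f p p.2 := by
  obtain ⟨r, hr, Φ, hΦ, hsub⟩ := (hh 0 hU0).exists_analyticOnNhd_sub_eq_apply_sub
  obtain ⟨ε, hε, hεU⟩ := EMetric.mem_nhds_iff.1 (hUopen.mem_nhds hU0)
  have hball : Metric.eball (0 : F₁ × F₂) (min r ε) ⊆ Metric.eball 0 r ∩ U :=
    fun x hx => ⟨Metric.eball_subset_eball (min_le_left _ _) hx,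
      hεU (Metric.eball_subset_eball (min_le_right _ _) hx)⟩
  let restrict : ((F₁ × F₂) →L[ℂ] G) →L[ℂ] F₂ →L[ℂ] G :=
    ContinuousLinearMap.precomp G (ContinuousLinearMap.inr ℂ F₁ F₂)
  refine ⟨Metric.eball 0 (min r ε), fun x => restrict (Φ (x, (x.1, 0))),
    fun x hx => (hball hx).2, Metric.isOpen_eball, Metric.mem_eball_self (lt_min hr hε), ?_, ?_⟩
  · have hpair : AnalyticOnNhd ℂ (fun x : F₁ × F₂ => (x, ((x.1, 0) : F₁ × F₂))) Set.univ :=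
      analyticOnNhd_id.prod (((ContinuousLinearMap.inl ℂ F₁ F₂).comp
        (ContinuousLinearMap.fst ℂ F₁ F₂)).analyticOnNhd _)
    refine (restrict.analyticOnNhd _).comp
      (hΦ.comp (hpair.mono (Set.subset_univ _)) fun x hx => ?_) (Set.mapsTo_univ _ _)
    rw [Metric.mem_eball, Prod.edist_eq]
    exact max_lt (hball hx).1 (hball (Prod.mk_fst_zero_mem_eball hx)).1
  · intro x hx
    have hx0 := hball (Prod.mk_fst_zero_mem_eball hx)
    have hfactor := hsub x (hball hx).1 (x.1, 0) hx0.1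
    rw [hvan x.1 hx0.2, sub_zero] at hfactor
    have hdiff : x - (x.1, 0) = ContinuousLinearMap.inr ℂ F₁ F₂ x.2 := by ext <;> simp
    rw [hfactor, hdiff]
    rfl

/-- Miyajima factorization lemma. Let `F₁, F₂, G` be complex Banach spaces,
`U` an open neighborhood of `0` in `E = F₁ × F₂`, and `h : U → G` analytic with
`h(t, 0) = 0`. Then on a smaller open neighborhood `U'` of `0` there is an analytic map
`f : U' → L(F₂, G)` with `h(t, s) = f(t, s)(s)`. -/
theorem stmt5 (F₁ F₂ G : Type*)
    [NormedAddCommGroup F₁] [NormedSpace ℂ F₁] [CompleteSpace F₁]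
    [NormedAddCommGroup F₂] [NormedSpace ℂ F₂] [CompleteSpace F₂]
    [NormedAddCommGroup G] [NormedSpace ℂ G] [CompleteSpace G]
    (U : Set (F₁ × F₂)) (hUopen : IsOpen U) (hU0 : (0 : F₁ × F₂) ∈ U)
    (h : F₁ × F₂ → G) (hh : AnalyticOnNhd ℂ h U)
    (hvan : ∀ t : F₁, (t, (0 : F₂)) ∈ U → h (t, 0) = 0) :
    ∃ (U' : Set (F₁ × F₂)) (f : F₁ × F₂ → (F₂ →L[ℂ] G)),
      U' ⊆ U ∧ IsOpen U' ∧ (0 : F₁ × F₂) ∈ U' ∧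
      AnalyticOnNhd ℂ f U' ∧
      ∀ p ∈ U', h p = f p p.2 :=
  stmt5_general F₁ F₂ G U hUopen hU0 h hh hvan
end

section
/- Let L¹, L², L³ be normed vector spaces over ℝ or ℂ. Suppose given continuous linear maps d₁ : L¹ → L², d₂ : L² → L³, δ₁ : L² → L¹, δ₂ : L³ → L², a linear map H : L² → L², a continuous symmetric bilinear map B : L¹ × L¹ → L², a continuous bilinear map C : L² × L¹ → L³, and a constant K ≥ 0, satisfying: (i) Hodge decomposition: d₁ ∘ δ₁ + δ₂ ∘ d₂ = id − H on L²; (ii) Leibniz rule: d₂(B(μ, μ)) = 2·C(d₁ μ, μ) for all μ ∈ L¹; (iii) Jacobi identity: C(B(μ, μ), μ) = 0 for all μ ∈ L¹; (iv) the estimate ‖δ₂(C(x, μ))‖ ≤ K·‖x‖·‖μ‖ for all x ∈ L², μ ∈ L¹. Then for every μ ∈ L¹ with H(B(μ, μ)) = 0 and K·‖μ‖ < 1, one has d₁(μ + ½·δ₁(B(μ, μ))) = 0 if and only if d₁ μ + ½·B(μ, μ) = 0. -/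
/-!
Write `b = [μ, μ]` and `E = dμ + ½ b` for the Maurer–Cartan curvature. The Hodge decomposition
applied to `b`, whose harmonic part vanishes, together with Leibniz (`d b = 2 [dμ, μ]`) and
Jacobi (`[b, μ] = 0`, so `[dμ, μ] = [E, μ]`), turns the gauge-fixed expression into
`d(μ + ½ δ b) = E - δ[E, μ]`. The operator `E ↦ δ[E, μ]` has norm at most `K‖μ‖ < 1`, so
`E - δ[E, μ]` vanishes only when `E` does.
-/

theorem sub_eq_zero_iff_of_norm_le_mul {E : Type*} [NormedAddCommGroup E] {f : E → E} {c : ℝ}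
    {x : E} (hc : c < 1) (hf : ‖f x‖ ≤ c * ‖x‖) : x - f x = 0 ↔ x = 0 := by
  constructor
  · intro hx
    rw [sub_eq_zero] at hx
    have hle : ‖x‖ ≤ c * ‖x‖ := by rwa [← hx] at hf
    exact norm_le_zero_iff.mp (by nlinarith [norm_nonneg x])
  · rintro rfl
    simpa using hf

section Hodge

variable {𝕜 L₁ L₂ L₃ : Type*} [DivisionRing 𝕜] [NeZero (2 : 𝕜)]
  [AddCommGroup L₁] [Module 𝕜 L₁] [AddCommGroup L₂] [Module 𝕜 L₂] [AddCommGroup L₃] [Module 𝕜 L₃]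

/-- Here `c` plays the role of `[·, μ]` and `b` that of `[μ, μ]`. -/
theorem map_add_inv_two_smul_eq_sub_of_hodge (d₁ : L₁ →ₗ[𝕜] L₂) (d₂ : L₂ →ₗ[𝕜] L₃)
    (δ₁ : L₂ →ₗ[𝕜] L₁) (δ₂ : L₃ →ₗ[𝕜] L₂) (H : L₂ →ₗ[𝕜] L₂)
    (hodge : ∀ x : L₂, d₁ (δ₁ x) + δ₂ (d₂ x) = x - H x)
    (c : L₂ →ₗ[𝕜] L₃) (μ : L₁) (b : L₂)
    (hHb : H b = 0) (hd₂b : d₂ b = 2 • c (d₁ μ)) (hcb : c b = 0) :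
    d₁ (μ + (2 : 𝕜)⁻¹ • δ₁ b) = (d₁ μ + (2 : 𝕜)⁻¹ • b) - δ₂ (c (d₁ μ + (2 : 𝕜)⁻¹ • b)) := by
  have hc : c (d₁ μ + (2 : 𝕜)⁻¹ • b) = c (d₁ μ) := by simp [hcb]
  have hd₁δ₁ : d₁ (δ₁ b) = b - 2 • δ₂ (c (d₁ μ)) := by
    rw [← map_nsmul, ← hd₂b, eq_sub_iff_add_eq, hodge, hHb, sub_zero]
  have half_two : (2 : 𝕜)⁻¹ • 2 • δ₂ (c (d₁ μ)) = δ₂ (c (d₁ μ)) := by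
    rw [← Nat.cast_smul_eq_nsmul 𝕜, Nat.cast_ofNat, inv_smul_smul₀ two_ne_zero]
  rw [hc, map_add, map_smul, hd₁δ₁, smul_sub, half_two]
  abel

end Hodge

theorem stmt7_general (𝕜 : Type*) [RCLike 𝕜]
    (L₁ L₂ L₃ : Type*)
    [NormedAddCommGroup L₁] [NormedSpace 𝕜 L₁]
    [NormedAddCommGroup L₂] [NormedSpace 𝕜 L₂]
    [NormedAddCommGroup L₃] [NormedSpace 𝕜 L₃]
    (d₁ : L₁ →L[𝕜] L₂) (d₂ : L₂ →L[𝕜] L₃)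
    (δ₁ : L₂ →L[𝕜] L₁) (δ₂ : L₃ →L[𝕜] L₂)
    (Hh : L₂ →ₗ[𝕜] L₂)
    (B : L₁ →L[𝕜] L₁ →L[𝕜] L₂)
    (C : L₂ →L[𝕜] L₁ →L[𝕜] L₃)
    (K : ℝ)
    (hodge : ∀ x : L₂, d₁ (δ₁ x) + δ₂ (d₂ x) = x - Hh x)
    (leibniz : ∀ μ : L₁, d₂ (B μ μ) = 2 • C (d₁ μ) μ)
    (jacobi : ∀ μ : L₁, C (B μ μ) μ = 0)
    (est : ∀ (x : L₂) (μ : L₁), ‖δ₂ (C x μ)‖ ≤ K * ‖x‖ * ‖μ‖)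
    (μ : L₁) (hharm : Hh (B μ μ) = 0) (hsmall : K * ‖μ‖ < 1) :
    d₁ (μ + (2 : 𝕜)⁻¹ • δ₁ (B μ μ)) = 0 ↔ d₁ μ + (2 : 𝕜)⁻¹ • B μ μ = 0 := by
  have hgauge := map_add_inv_two_smul_eq_sub_of_hodge (d₁ : L₁ →ₗ[𝕜] L₂) d₂ δ₁ δ₂ Hh hodge
    (C.flip μ : L₂ →ₗ[𝕜] L₃) μ (B μ μ) hharm (by simpa using leibniz μ) (by simpa using jacobi μ)
  simp only [ContinuousLinearMap.coe_coe, ContinuousLinearMap.flip_apply] at hgauge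
  rw [hgauge]
  refine sub_eq_zero_iff_of_norm_le_mul (f := fun E => δ₂ (C E μ)) hsmall ?_
  exact (est _ μ).trans_eq (by ring)

/-- dgla gauge-fixing lemma. With Hodge decomposition
`d₁ ∘ δ₁ + δ₂ ∘ d₂ = id − H`, Leibniz rule `d₂(B(μ,μ)) = 2·C(d₁ μ, μ)`, Jacobi identity
`C(B(μ,μ), μ) = 0` and the estimate `‖δ₂(C(x,μ))‖ ≤ K‖x‖‖μ‖`, for `μ` with
`H(B(μ,μ)) = 0` and `K‖μ‖ < 1` the gauge-fixed equation `d₁(μ + ½ δ₁(B(μ,μ))) = 0` is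
equivalent to the Maurer–Cartan equation `d₁ μ + ½ B(μ,μ) = 0`. -/
theorem stmt7 (𝕜 : Type*) [RCLike 𝕜]
    (L₁ L₂ L₃ : Type*)
    [NormedAddCommGroup L₁] [NormedSpace 𝕜 L₁]
    [NormedAddCommGroup L₂] [NormedSpace 𝕜 L₂]
    [NormedAddCommGroup L₃] [NormedSpace 𝕜 L₃]
    (d₁ : L₁ →L[𝕜] L₂) (d₂ : L₂ →L[𝕜] L₃)
    (δ₁ : L₂ →L[𝕜] L₁) (δ₂ : L₃ →L[𝕜] L₂)
    (Hh : L₂ →ₗ[𝕜] L₂)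
    (B : L₁ →L[𝕜] L₁ →L[𝕜] L₂) (hBsymm : ∀ x y : L₁, B x y = B y x)
    (C : L₂ →L[𝕜] L₁ →L[𝕜] L₃)
    (K : ℝ) (hK : 0 ≤ K)
    (hodge : ∀ x : L₂, d₁ (δ₁ x) + δ₂ (d₂ x) = x - Hh x)
    (leibniz : ∀ μ : L₁, d₂ (B μ μ) = 2 • C (d₁ μ) μ)
    (jacobi : ∀ μ : L₁, C (B μ μ) μ = 0)
    (est : ∀ (x : L₂) (μ : L₁), ‖δ₂ (C x μ)‖ ≤ K * ‖x‖ * ‖μ‖)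
    (μ : L₁) (hharm : Hh (B μ μ) = 0) (hsmall : K * ‖μ‖ < 1) :
    d₁ (μ + (2 : 𝕜)⁻¹ • δ₁ (B μ μ)) = 0 ↔ d₁ μ + (2 : 𝕜)⁻¹ • B μ μ = 0 :=
  stmt7_general 𝕜 L₁ L₂ L₃ d₁ d₂ δ₁ δ₂ Hh B C K hodge leibniz jacobi est μ hharm hsmall
end

section
/- Let R be a commutative ring in which 2 = 0 (so R is an algebra over the field 𝔽₂ = ZMod 2). Let m : R ⊗_{𝔽₂} R → R be the multiplication map and τ : R ⊗_{𝔽₂} R → R ⊗_{𝔽₂} R the swap isomorphism determined by a ⊗ b ↦ b ⊗ a. If x ∈ R ⊗_{𝔽₂} R satisfies τ(x) = x, then m(x) is a square in R, i.e. m(x) = r² for some r ∈ R. -/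
/-!
Expand `x` in the basis `bᵢ ⊗ bⱼ` coming from an `𝔽₂`-basis `b` of `R`. Swap-invariance makes
the coefficients symmetric, `cᵢⱼ = cⱼᵢ`, so in `m x = ∑ cᵢⱼ bᵢ bⱼ` the off-diagonal terms cancel in
pairs and `m x = ∑ cᵢᵢ bᵢ² = (∑ cᵢᵢ bᵢ)²`, using `c² = c` in `𝔽₂` and additivity of squaring.
-/

open TensorProduct

namespace Module.Basis

variable {K M N ι κ : Type*} [CommSemiring K] [AddCommMonoid M] [Module K M]
  [AddCommMonoid N] [Module K N]

theorem tensorProduct_repr_comm (b : Basis ι K M) (c : Basis κ K N) (x : M ⊗[K] N)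
    (p : κ × ι) :
    (c.tensorProduct b).repr (TensorProduct.comm K M N x) p =
      (b.tensorProduct c).repr x p.swap := by
  induction x using TensorProduct.induction_on with
  | zero => simp
  | tmul m n =>
    obtain ⟨j, i⟩ := p
    simp [tensorProduct_repr_tmul_apply, mul_comm]
  | add x y hx hy => simp [hx, hy]

theorem mul'_eq_sum_repr {R : Type*} [Semiring R] [Algebra K R] (b : Basis ι K R)
    (x : R ⊗[K] R) :
    LinearMap.mul' K R x = ((b.tensorProduct b).repr x).sum fun p c => c • (b p.1 * b p.2) := by
  conv_lhs => rw [← (b.tensorProduct b).linearCombination_repr x]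
  simp [Finsupp.linearCombination_apply, map_finsuppSum, tensorProduct_apply']

end Module.Basis

theorem Finset.sum_eq_sum_filter_diag_of_swap {ι M : Type*} [DecidableEq ι] [AddCommMonoid M]
    (hM : ∀ a : M, a + a = 0) {s : Finset (ι × ι)} (hs : ∀ p ∈ s, p.swap ∈ s)
    {f : ι × ι → M} (hf : ∀ p ∈ s, f p.swap = f p) :
    ∑ p ∈ s, f p = ∑ p ∈ s with p.1 = p.2, f p := by
  have hoff : ∑ p ∈ s with p.1 ≠ p.2, f p = 0 := by
    refine sum_involution (fun p _ => p.swap) (fun p hp => ?_) (fun p hp _ h => ?_)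
      (fun p hp => ?_) (fun p _ => rfl)
    · rw [hf p (mem_filter.1 hp).1, hM]
    · exact (mem_filter.1 hp).2 (Prod.ext_iff.1 h).1.symm
    · simp only [mem_filter] at hp ⊢
      exact ⟨hs p hp.1, Ne.symm hp.2⟩
  rw [← sum_filter_add_sum_filter_not s (fun p => p.1 = p.2), hoff, add_zero]

theorem Module.Basis.mul'_eq_sum_diag_of_comm_eq {K R ι : Type*} [CommSemiring K]
    [CommSemiring R] [Algebra K R] [DecidableEq ι] (h2 : (2 : R) = 0) (b : Basis ι K R)
    {x : R ⊗[K] R} (hx : TensorProduct.comm K R R x = x) :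
    LinearMap.mul' K R x =
      ∑ p ∈ ((b.tensorProduct b).repr x).support with p.1 = p.2,
        (b.tensorProduct b).repr x p • (b p.1 * b p.1) := by
  have hsym : ∀ p, (b.tensorProduct b).repr x p.swap = (b.tensorProduct b).repr x p := fun p =>
    by rw [← b.tensorProduct_repr_comm b, hx]
  rw [b.mul'_eq_sum_repr, Finsupp.sum, Finset.sum_eq_sum_filter_diag_of_swap
    (fun a => by rw [← two_mul, h2, zero_mul]) (fun p hp => by simpa [hsym] using hp)
    (fun p _ => by rw [hsym, Prod.fst_swap, Prod.snd_swap, mul_comm])]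
  refine Finset.sum_congr rfl fun p hp => ?_
  rw [(Finset.mem_filter.1 hp).2]

/-- Let `R` be a commutative ring with `2 = 0`, viewed as an algebra over
`𝔽₂ = ZMod 2`. If `x ∈ R ⊗_{𝔽₂} R` is invariant under the swap involution, then its image
under the multiplication map `R ⊗_{𝔽₂} R → R` is a square in `R`. -/
theorem stmt9 (R : Type*) [CommRing R] [Algebra (ZMod 2) R] (h2 : (2 : R) = 0)
    (x : TensorProduct (ZMod 2) R R)
    (hx : TensorProduct.comm (ZMod 2) R R x = x) :
    ∃ r : R, LinearMap.mul' (ZMod 2) R x = r ^ 2 := by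
  classical
  -- `CharP R 2`, needed for `CharTwo.sum_sq`, fails for the zero ring
  obtain _ | _ := subsingleton_or_nontrivial R
  · exact ⟨0, Subsingleton.elim _ _⟩
  have : CharP R 2 := CharTwo.of_one_ne_zero_of_two_eq_zero one_ne_zero h2
  let b := Module.Basis.ofVectorSpace (ZMod 2) R
  set c := (b.tensorProduct b).repr x
  refine ⟨∑ p ∈ c.support with p.1 = p.2, c p • b p.1, ?_⟩
  rw [b.mul'_eq_sum_diag_of_comm_eq h2 hx, CharTwo.sum_sq]
  refine Finset.sum_congr rfl fun p _ => ?_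
  rw [smul_pow, ZMod.pow_card, sq]
end
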